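/- arXiv:1512.06044 — 2 statements merged into one kernel-verified Lean document; each statement's English description precedes it below -/
import Mathlib

section
/- Let X be a scheme whose underlying topological space is Noetherian and of finite Krull dimension. If δ and δ′ are two dimension functions on X, then the function δ − δ′ : X → ℤ is locally constant; in particular it is constant on every connected component of X, so any two dimension functions on X differ by a locally constant integer-valued function. -/
/-! Immediate specializations are exactly the covering relations of the specialization order,
and finite Krull dimension makes that order well-founded in both directions, so every
specialization `x ⤳ y` is a finite chain of immediate ones. Both `δ` and `δ'` drop by one along
each step, so `δ - δ'` is constant along specializations. In a Noetherian sober space every point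
lies in one of finitely many irreducible components, each the closure of a generic point, so a
function constant along specializations is locally constant. -/

open AlgebraicGeometry

/-- `y` is an immediate specialization of `x`: `y` lies in the closure of `{x}`, `y ≠ x`,
and there is no intermediate point `z` distinct from both `x` and `y` with
`z ∈ closure {x}` and `y ∈ closure {z}`. -/
def ImmediateSpecialization {X : Type*} [TopologicalSpace X] (x y : X) : Prop :=
  y ∈ closure ({x} : Set X) ∧ y ≠ x ∧
    ∀ z : X, z ∈ closure ({x} : Set X) → y ∈ closure ({z} : Set X) → z = x ∨ z = y

/-- A dimension function on (the underlying space of) a scheme: `δ(x) = δ(y) + 1` whenever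
`y` is an immediate specialization of `x`. -/
def IsDimensionFunction {X : Type*} [TopologicalSpace X] (δ : X → ℤ) : Prop :=
  ∀ x y : X, ImmediateSpecialization x y → δ x = δ y + 1

open Order TopologicalSpace

section FiniteDimensionalOrder

variable {α : Type*} [Preorder α] [FiniteDimensionalOrder α]

instance FiniteDimensionalOrder.wellFoundedLT : WellFoundedLT α :=
  ⟨SetRel.IsWellFounded.of_finiteDimensional {(a, b) : α × α | a < b}⟩

instance FiniteDimensionalOrder.wellFoundedGT : WellFoundedGT α :=
  ⟨SetRel.IsWellFounded.inv_of_finiteDimensional {(a, b) : α × α | a < b}⟩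

end FiniteDimensionalOrder

theorem eq_of_le_of_forall_covBy {α β : Type*} [PartialOrder α] [WellFoundedLT α]
    [WellFoundedGT α] {f : α → β} (hf : ∀ a b, a ⋖ b → f a = f b) {x y : α}
    (hxy : x ≤ y) : f x = f y := by
  obtain ⟨a, rfl, n, rfl, ha⟩ := exists_covBy_seq_of_wellFoundedLT_wellFoundedGT_of_le hxy
  clear hxy
  induction n with
  | zero => rfl
  | succ n ih => exact (ih fun i hi => ha i (by omega)).trans (hf _ _ (ha n n.lt_succ_self))

theorem isLocallyConstant_of_forall_specializes {X β : Type*} [TopologicalSpace X]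
    [NoetherianSpace X] [QuasiSober X] {f : X → β} (hf : ∀ x y : X, x ⤳ y → f x = f y) :
    IsLocallyConstant f := by
  refine (IsLocallyConstant.iff_exists_open f).2 fun x => ?_
  refine ⟨(⋃ Z ∈ {Z ∈ irreducibleComponents X | x ∉ Z}, Z)ᶜ, ?_, ?_, fun y hy => ?_⟩
  · refine (Set.Finite.isClosed_biUnion ?_ fun Z hZ => ?_).isOpen_compl
    · exact NoetherianSpace.finite_irreducibleComponents.subset (Set.sep_subset _ _)
    · exact isClosed_of_mem_irreducibleComponents Z hZ.1
  · simp
  · have hZ := irreducibleComponent_mem_irreducibleComponents y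
    have hxZ : x ∈ irreducibleComponent y := by
      by_contra h
      exact hy (Set.mem_biUnion ⟨hZ, h⟩ mem_irreducibleComponent)
    have hη := (isIrreducible_irreducibleComponent (x := y)).isGenericPoint_genericPoint_closure
    rw [isClosed_irreducibleComponent.closure_eq] at hη
    exact (hf _ _ (hη.specializes mem_irreducibleComponent)).symm.trans
      (hf _ _ (hη.specializes hxZ))

section SpecializationOrder

-- `x ≤ y` means `y ⤳ x`, i.e. `x ∈ closure {y}`.
attribute [local instance] specializationOrder

variable {X : Type*} [TopologicalSpace X] [T0Space X]

theorem krullDim_le_topologicalKrullDim : krullDim X ≤ topologicalKrullDim X := by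
  let closureSingleton (x : X) : IrreducibleCloseds X :=
    ⟨closure {x}, isIrreducible_singleton.closure, isClosed_closure⟩
  refine krullDim_le_of_strictMono closureSingleton
    (Monotone.strictMono_of_injective (fun _ _ => specializes_iff_closure_subset.1) ?_)
  intro x y h
  exact (inseparable_iff_closure_eq.2 congr(($h : Set X))).eq

theorem ImmediateSpecialization.of_covBy {x y : X} (h : y ⋖ x) : ImmediateSpecialization x y := by
  refine ⟨specializes_iff_mem_closure.1 h.le, h.ne, fun z hz hyz => ?_⟩
  exact (h.eq_or_eq (specializes_iff_mem_closure.2 hyz) (specializes_iff_mem_closure.2 hz)).symm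

theorem IsDimensionFunction.sub_eq_of_specializes (hfd : topologicalKrullDim X < ⊤)
    {δ δ' : X → ℤ} (hδ : IsDimensionFunction δ) (hδ' : IsDimensionFunction δ') {x y : X}
    (h : x ⤳ y) : δ x - δ' x = δ y - δ' y := by
  have : Nonempty X := ⟨x⟩
  have : FiniteDimensionalOrder X := finiteDimensionalOrder_iff_krullDim_ne_bot_and_top.2
    ⟨krullDim_eq_bot_iff.not.2 (not_isEmpty_of_nonempty X),
      (krullDim_le_topologicalKrullDim.trans_lt hfd).ne⟩
  refine (eq_of_le_of_forall_covBy (f := fun z => δ z - δ' z) (fun a b hab => ?_)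
    (show y ≤ x from h)).symm
  have h₁ := hδ b a (.of_covBy hab)
  have h₂ := hδ' b a (.of_covBy hab)
  omega

end SpecializationOrder

/-- If `δ` and `δ'` are two dimension functions on a scheme `X` whose underlying space is
Noetherian and of finite Krull dimension, then `δ - δ'` is locally constant; in particular
it is constant on every connected component of `X`. -/
theorem dimensionFunction_sub_isLocallyConstant (X : Scheme)
    [TopologicalSpace.NoetherianSpace X] (hfd : topologicalKrullDim X < ⊤)
    (δ δ' : X → ℤ) (hδ : IsDimensionFunction δ) (hδ' : IsDimensionFunction δ') :
    IsLocallyConstant (fun x : X => δ x - δ' x) ∧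
      ∀ x y : X, y ∈ connectedComponent x → δ x - δ' x = δ y - δ' y := by
  have hlc : IsLocallyConstant (fun x : X => δ x - δ' x) :=
    isLocallyConstant_of_forall_specializes fun _ _ => hδ.sub_eq_of_specializes hfd hδ'
  exact ⟨hlc, fun x y hy => hlc.apply_eq_of_isPreconnected isPreconnected_connectedComponent
    mem_connectedComponent hy⟩
end

section
/- Let C be a triangulated category admitting arbitrary small coproducts, let t be a t-structure on C (written cohomologically, with full subcategories C^{≤n} and C^{≥n} and shift functor ⟦1⟧), and let G be a set of objects of C such that t is generated by G in the following sense: for every object L of C, L belongs to C^{≥1} if and only if Hom(K⟦n⟧, L) = 0 for every K ∈ G and every integer n ≥ 0. Then the following are equivalent: (i) G is a generating class of the triangulated category C, i.e. every object L with Hom(K⟦n⟧, L) = 0 for all K ∈ G and all n ∈ ℤ is a zero object; (ii) the t-structure t is left non-degenerate, i.e. every object L belonging to C^{≥m} for every integer m is a zero object. -/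
/-!
Shifting by `m - 1` turns the generation hypothesis into a description of every aisle:
`L ∈ C^{≥m}` iff `Hom(K⟦n⟧, L) = 0` for all `K ∈ G` and all `n ≥ 1 - m`. Hence `L` lies in
`C^{≥m}` for every `m` exactly when `Hom(K⟦n⟧, L) = 0` for all `K ∈ G` and all `n ∈ ℤ`, so
both conditions of the theorem require the same objects to be zero.
-/

open CategoryTheory CategoryTheory.Limits CategoryTheory.Pretriangulated
  CategoryTheory.Triangulated

universe w v u

namespace CategoryTheory

lemma subsingleton_shift_hom_shift_iff {C : Type*} [Category C] [HasShift C ℤ]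
    (X Y : C) (a b : ℤ) :
    Subsingleton (X⟦a⟧ ⟶ Y⟦b⟧) ↔ Subsingleton (X⟦a - b⟧ ⟶ Y) :=
  (((shiftFunctorAdd' C a (-b) (a - b) (by omega)).app X).homCongr (Iso.refl Y) |>.trans
    ((shiftEquiv C b).symm.toAdjunction.homEquiv _ _)).subsingleton_congr.symm

end CategoryTheory

namespace CategoryTheory.Triangulated.TStructure

variable {C : Type*} [Category C] [Preadditive C] [HasZeroObject C] [HasShift C ℤ]
  [∀ n : ℤ, (shiftFunctor C n).Additive] [Pretriangulated C]
  (t : TStructure C) {G : Set C}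

lemma ge_iff_of_generated
    (hgen : ∀ L : C, t.ge 1 L ↔ ∀ K ∈ G, ∀ n : ℤ, 0 ≤ n → Subsingleton (K⟦n⟧ ⟶ L))
    (L : C) (m : ℤ) :
    t.ge m L ↔ ∀ K ∈ G, ∀ n : ℤ, 1 - m ≤ n → Subsingleton (K⟦n⟧ ⟶ L) := by
  rw [← t.shift_ge (m - 1) 1 m (by omega), ObjectProperty.prop_shift_iff, hgen]
  refine forall₂_congr fun K _ => ⟨fun h n hn => ?_, fun h n hn => ?_⟩
  · simpa only [add_sub_cancel_right] using
      (subsingleton_shift_hom_shift_iff K L (n + (m - 1)) (m - 1)).1 (h _ (by omega))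
  · exact (subsingleton_shift_hom_shift_iff K L n (m - 1)).2 (h _ (by omega))

lemma forall_ge_iff_of_generated
    (hgen : ∀ L : C, t.ge 1 L ↔ ∀ K ∈ G, ∀ n : ℤ, 0 ≤ n → Subsingleton (K⟦n⟧ ⟶ L))
    (L : C) :
    (∀ m, t.ge m L) ↔ ∀ K ∈ G, ∀ n : ℤ, Subsingleton (K⟦n⟧ ⟶ L) := by
  simp only [t.ge_iff_of_generated hgen]
  exact ⟨fun h K hK n => h (1 - n) K hK n (by omega), fun h _ K hK n _ => h K hK n⟩

end CategoryTheory.Triangulated.TStructure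

/-- Let `C` be a triangulated category admitting arbitrary small coproducts and let `t` be a
t-structure on `C` (cohomological convention) generated by a set `G` of objects, in the sense
that an object `L` lies in `C^{≥1}` iff `Hom(K⟦n⟧, L) = 0` for all `K ∈ G` and all `n ≥ 0`.
Then `G` is a generating class of the triangulated category `C` (every `L` with
`Hom(K⟦n⟧, L) = 0` for all `K ∈ G`, `n ∈ ℤ` is zero) if and only if `t` is left
non-degenerate (every object lying in `C^{≥m}` for all `m ∈ ℤ` is zero). -/
theorem generated_tStructure_generating_iff_left_nondegenerate
    (C : Type u) [Category.{v} C] [Preadditive C] [HasZeroObject C] [HasShift C ℤ]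
    [∀ n : ℤ, (shiftFunctor C n).Additive] [Pretriangulated C] [IsTriangulated C]
    [HasCoproducts.{w} C]
    (t : TStructure C) (G : Set C)
    (hgen : ∀ L : C, t.ge 1 L ↔ ∀ K ∈ G, ∀ n : ℤ, 0 ≤ n → ∀ f : K⟦n⟧ ⟶ L, f = 0) :
    (∀ L : C, (∀ K ∈ G, ∀ n : ℤ, ∀ f : K⟦n⟧ ⟶ L, f = 0) → IsZero L) ↔
      ∀ L : C, (∀ m : ℤ, t.ge m L) → IsZero L := by
  simp only [← subsingleton_iff_forall_eq] at hgen ⊢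
  exact forall_congr' fun L => imp_congr_left (t.forall_ge_iff_of_generated hgen L).symm
end
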